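/- On four qubits (with qubits labelled p, q, r, s in tensor-product order), let A = (1/8)(X_r Y_s X_p X_q + Y_r X_s X_p X_q + Y_r Y_s Y_p X_q + Y_r Y_s X_p Y_q − X_r X_s Y_p X_q − X_r X_s X_p Y_q − Y_r X_s Y_p Y_q − X_r Y_s Y_p Y_q). Then every eigenvalue of A lies in the set {0, 1, −1}; equivalently, the spectrum of A is contained in {0, 1, −1}. -/

import Mathlib

open Matrix

/-- The Pauli `X` matrix. -/
noncomputable def PX : Matrix (Fin 2) (Fin 2) ℂ := !![0, 1; 1, 0]

/-- The Pauli `Y` matrix. -/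
noncomputable def PY : Matrix (Fin 2) (Fin 2) ℂ := !![0, -Complex.I; Complex.I, 0]

/-- The Pauli `Z` matrix. -/
noncomputable def PZ : Matrix (Fin 2) (Fin 2) ℂ := !![1, 0; 0, -1]

/-- The operator on `N` qubits acting as the single-qubit operator `M` on qubit `k`
and as the identity on all other qubits (the `N`-qubit space, i.e. the `N`-fold tensor
product of `ℂ²`, is indexed by functions `Fin N → Fin 2`). -/
noncomputable def opN (N k : ℕ) (M : Matrix (Fin 2) (Fin 2) ℂ) :
    Matrix (Fin N → Fin 2) (Fin N → Fin 2) ℂ :=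
  Matrix.of fun v w =>
    ∏ j : Fin N, if (j : ℕ) = k then M (v j) (w j) else (if v j = w j then 1 else 0)

/-- The double-qubit excitation generator `A_{pqrs}` on four qubits
labelled `p = 0`, `q = 1`, `r = 2`, `s = 3` (in tensor-product order). -/
noncomputable def Aop : Matrix (Fin 4 → Fin 2) (Fin 4 → Fin 2) ℂ :=
  (1 / 8 : ℂ) •
    (opN 4 2 PX * opN 4 3 PY * opN 4 0 PX * opN 4 1 PX
      + opN 4 2 PY * opN 4 3 PX * opN 4 0 PX * opN 4 1 PX
      + opN 4 2 PY * opN 4 3 PY * opN 4 0 PY * opN 4 1 PX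
      + opN 4 2 PY * opN 4 3 PY * opN 4 0 PX * opN 4 1 PY
      - opN 4 2 PX * opN 4 3 PX * opN 4 0 PY * opN 4 1 PX
      - opN 4 2 PX * opN 4 3 PX * opN 4 0 PX * opN 4 1 PY
      - opN 4 2 PY * opN 4 3 PX * opN 4 0 PY * opN 4 1 PY
      - opN 4 2 PX * opN 4 3 PY * opN 4 0 PY * opN 4 1 PY)

/-! `A = i (|0011⟩⟨1100| - |1100⟩⟨0011|)`: a tensor product of `X`'s and `Y`'s only connects a
basis state `v` to its complement `v + 1`, and the eight phases cancel except on the pair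
`0011`, `1100`. A matrix `x E_ab + y E_ba` with `a ≠ b` satisfies `M³ = xy M`, here `A³ = A`,
so every point of the spectrum is a root of `z³ - z`. -/

open Polynomial in
theorem spectrum_subset_isRoot_of_aeval_eq_zero {𝕜 A : Type*} [Field 𝕜] [Ring A] [Algebra 𝕜 A]
    {a : A} {p : 𝕜[X]} (hp : aeval a p = 0) : spectrum 𝕜 a ⊆ {z | p.IsRoot z} := by
  intro z hz
  have hmem := spectrum.subset_polynomial_aeval a p ⟨z, hz, rfl⟩
  rw [hp] at hmem
  rcases subsingleton_or_nontrivial A with _ | _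
  · simp [spectrum.of_subsingleton] at hz
  · rwa [spectrum.zero_eq] at hmem

open Polynomial in
theorem spectrum_subset_of_pow_three_eq_self {𝕜 A : Type*} [Field 𝕜] [Ring A] [Algebra 𝕜 A]
    {a : A} (ha : a ^ 3 = a) : spectrum 𝕜 a ⊆ {0, 1, -1} := by
  refine (spectrum_subset_isRoot_of_aeval_eq_zero (p := X ^ 3 - X) (by simp [ha])).trans ?_
  intro z hz
  have hfactor : z * (z - 1) * (z + 1) = 0 := by
    simp only [Set.mem_ofPred_eq, IsRoot.def, eval_sub, eval_pow, eval_X] at hz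
    linear_combination hz
  simpa [sub_eq_zero, add_eq_zero_iff_eq_neg, or_assoc] using hfactor

namespace Matrix

theorem single_add_single_pow_three {n R : Type*} [Fintype n] [DecidableEq n] [CommRing R]
    {a b : n} (hab : a ≠ b) (x y : R) :
    (single a b x + single b a y) ^ 3 = (x * y) • (single a b x + single b a y) := by
  simp only [pow_succ, pow_zero, one_mul, add_mul, mul_add, single_mul_single_same,
    single_mul_single_of_ne _ _ _ _ hab, single_mul_single_of_ne _ _ _ _ hab.symm, zero_add,
    add_zero, smul_add, smul_single]
  ring_nf

section piKronecker

variable {ι n R : Type*} [Fintype ι] [CommSemiring R]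

def piKronecker (f : ι → Matrix n n R) : Matrix (ι → n) (ι → n) R :=
  of fun v w => ∏ j, f j (v j) (w j)

theorem piKronecker_mul [DecidableEq ι] [Fintype n] (f g : ι → Matrix n n R) :
    piKronecker f * piKronecker g = piKronecker (f * g) := by
  ext v w
  simp only [piKronecker, mul_apply, of_apply, Pi.mul_apply, ← Finset.prod_mul_distrib]
  rw [← Fintype.piFinset_univ, Finset.prod_univ_sum]

theorem piKronecker_apply_eq_zero_of_ne_add_one {f : ι → Matrix (Fin 2) (Fin 2) R}
    (hf : ∀ j i, f j i i = 0) {v w : ι → Fin 2} (h : w ≠ v + 1) : piKronecker f v w = 0 := by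
  obtain ⟨j, hj⟩ : ∃ j, v j = w j := by
    by_contra! hne
    have hflip : ∀ a b : Fin 2, a ≠ b → b = a + 1 := by decide
    exact h (funext fun j => hflip _ _ (hne j))
  exact Finset.prod_eq_zero (Finset.mem_univ j) (hj ▸ hf j (v j))

end piKronecker

end Matrix

open Matrix

theorem opN_eq_piKronecker (N k : ℕ) (M : Matrix (Fin 2) (Fin 2) ℂ) :
    opN N k M = piKronecker fun j : Fin N => if (j : ℕ) = k then M else 1 := by
  ext v w
  simp only [opN, piKronecker, of_apply]
  refine Finset.prod_congr rfl fun j _ => ?_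
  split_ifs <;> simp [one_apply, *]

theorem opN_mul_opN_mul_opN_mul_opN (A B C D : Matrix (Fin 2) (Fin 2) ℂ) :
    opN 4 2 A * opN 4 3 B * opN 4 0 C * opN 4 1 D = piKronecker ![C, D, A, B] := by
  simp only [opN_eq_piKronecker, piKronecker_mul]
  congr 1
  funext j
  fin_cases j <;> simp

theorem PX_apply_self (i : Fin 2) : PX i i = 0 := by fin_cases i <;> rfl

theorem PY_apply_self (i : Fin 2) : PY i i = 0 := by fin_cases i <;> rfl

theorem Aop_eq_sum_piKronecker : Aop = (1 / 8 : ℂ) •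
    (piKronecker ![PX, PX, PX, PY] + piKronecker ![PX, PX, PY, PX]
      + piKronecker ![PY, PX, PY, PY] + piKronecker ![PX, PY, PY, PY]
      - piKronecker ![PY, PX, PX, PX] - piKronecker ![PX, PY, PX, PX]
      - piKronecker ![PY, PY, PY, PX] - piKronecker ![PY, PY, PX, PY]) := by
  simp only [Aop, opN_mul_opN_mul_opN_mul_opN]

theorem Aop_eq_single_add_single :
    Aop = single ![0, 0, 1, 1] ![1, 1, 0, 0] Complex.I
      + single ![1, 1, 0, 0] ![0, 0, 1, 1] (-Complex.I) := by
  ext v w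
  by_cases hw : w = v + 1
  · subst hw
    obtain ⟨x, y, z, t, rfl⟩ : ∃ x y z t, v = ![x, y, z, t] :=
      ⟨v 0, v 1, v 2, v 3, by ext j; fin_cases j <;> rfl⟩
    fin_cases x <;> fin_cases y <;> fin_cases z <;> fin_cases t <;>
      simp [Aop_eq_sum_piKronecker, piKronecker, Fin.prod_univ_four, PX, PY, vecHead, vecTail] <;>
      ring
  · have hzero : Aop v w = 0 := by
      simp [Aop_eq_sum_piKronecker, piKronecker_apply_eq_zero_of_ne_add_one, hw,
        Fin.forall_fin_succ, PX_apply_self, PY_apply_self]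
    rw [hzero, Matrix.add_apply, single_apply, single_apply, if_neg, if_neg, add_zero] <;>
      rintro ⟨rfl, rfl⟩ <;> exact hw (by decide)

theorem Aop_pow_three : Aop ^ 3 = Aop := by
  rw [Aop_eq_single_add_single, single_add_single_pow_three (by decide), mul_neg,
    Complex.I_mul_I, neg_neg, one_smul]

/-- the spectrum of `A` is contained in `{0, 1, −1}`. -/
theorem Aop_spectrum_subset : spectrum ℂ Aop ⊆ ({0, 1, -1} : Set ℂ) :=
  spectrum_subset_of_pow_three_eq_self Aop_pow_three
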